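/- Let d₂, d₃ be real with d₂ + d₃ > 0 and d₂ > d₃. Then for every nonzero complex 3×3 matrix Δ, with A, B, C as above, d₂B + d₃C ≥ (1/3)(d₂+d₃)A, and equality holds if and only if ΔΔ† is proportional to the identity and Δ†Δ is real. -/

import Mathlib

/-!
Put `P = Δᴴ Δ`. Cycling traces gives `A = (Re tr P)²`, `B = Re tr (P Pᴴ)` and
`C = Re tr (P Pᵀ)`, so `d₂ B + d₃ C = ∑ᵢⱼ ((d₂ + d₃) (Re Pᵢⱼ)² + (d₂ - d₃) (Im Pᵢⱼ)²)` is a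
positive definite quadratic form in `P`. Removing the scalar part `(Re tr P / 3) • 1` from `P`
lowers this form by exactly `(d₂ + d₃) A / 3`, so the defect of the inequality is the form
evaluated at `P - (Re tr P / 3) • 1`: it is nonnegative, and vanishes iff `P` is a real multiple
of the identity. For a square `Δ ≠ 0` this says that `Δ Δᴴ` is scalar and `Δᴴ Δ` is real.
-/

open Matrix

section Rectangular

variable {m n : Type*} [Fintype m] [Fintype n]

theorem re_trace_mul_conjTranspose (M : Matrix m n ℂ) :
    (M * Mᴴ).trace.re = ∑ i, ∑ j, ((M i j).re ^ 2 + (M i j).im ^ 2) := by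
  simp [Matrix.trace, Matrix.mul_apply, Complex.mul_re, sq]

theorem re_trace_mul_transpose (M : Matrix m n ℂ) :
    (M * Mᵀ).trace.re = ∑ i, ∑ j, ((M i j).re ^ 2 - (M i j).im ^ 2) := by
  simp [Matrix.trace, Matrix.mul_apply, Complex.mul_re, sq]

theorem trace_mul_conjTranspose_mul_self (Δ : Matrix m n ℂ) :
    (Δ * Δᴴ * (Δ * Δᴴ)).trace = (Δᴴ * Δ * (Δᴴ * Δ)ᴴ).trace := by
  rw [conjTranspose_mul, conjTranspose_conjTranspose, Matrix.mul_assoc, trace_mul_comm,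
    Matrix.mul_assoc, Matrix.mul_assoc, Matrix.mul_assoc]

theorem trace_mul_transpose_mul_conjTranspose (Δ : Matrix m n ℂ) :
    (Δ * Δᵀ * (Δ * Δᵀ)ᴴ).trace = (Δᴴ * Δ * (Δᴴ * Δ)ᵀ).trace := by
  rw [conjTranspose_mul, transpose_mul, conjTranspose_transpose_eq_transpose_conjTranspose,
    ← Matrix.mul_assoc, trace_mul_comm]
  simp only [Matrix.mul_assoc]

/-- `d₂ B + d₃ C` of the paper, as a function of `P = Δᴴ Δ`. -/
def weightedTraceForm (d₂ d₃ : ℝ) (M : Matrix m n ℂ) : ℝ :=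
  d₂ * (M * Mᴴ).trace.re + d₃ * (M * Mᵀ).trace.re

theorem weightedTraceForm_eq_sum (d₂ d₃ : ℝ) (M : Matrix m n ℂ) :
    weightedTraceForm d₂ d₃ M =
      ∑ i, ∑ j, ((d₂ + d₃) * (M i j).re ^ 2 + (d₂ - d₃) * (M i j).im ^ 2) := by
  simp only [weightedTraceForm, re_trace_mul_conjTranspose, re_trace_mul_transpose,
    Finset.mul_sum, ← Finset.sum_add_distrib]
  congr! 2
  ring

variable {d₂ d₃ : ℝ}

theorem weightedTraceForm_nonneg (h₁ : 0 ≤ d₂ + d₃) (h₂ : d₃ ≤ d₂) (M : Matrix m n ℂ) :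
    0 ≤ weightedTraceForm d₂ d₃ M := by
  rw [weightedTraceForm_eq_sum]
  have : 0 ≤ d₂ - d₃ := sub_nonneg.2 h₂
  positivity

theorem weightedTraceForm_eq_zero_iff (h₁ : 0 < d₂ + d₃) (h₂ : d₃ < d₂) {M : Matrix m n ℂ} :
    weightedTraceForm d₂ d₃ M = 0 ↔ M = 0 := by
  have h₂' : 0 < d₂ - d₃ := sub_pos.2 h₂
  refine ⟨fun h => ?_, fun h => by simp [h, weightedTraceForm]⟩
  rw [weightedTraceForm_eq_sum] at h
  ext i j
  have hterm : ∀ i j, 0 ≤ (d₂ + d₃) * (M i j).re ^ 2 + (d₂ - d₃) * (M i j).im ^ 2 :=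
    fun _ _ => by positivity
  have hij : (d₂ + d₃) * (M i j).re ^ 2 + (d₂ - d₃) * (M i j).im ^ 2 = 0 := by
    rw [Finset.sum_eq_zero_iff_of_nonneg fun i _ => Finset.sum_nonneg fun j _ => hterm i j] at h
    exact (Finset.sum_eq_zero_iff_of_nonneg fun j _ => hterm i j).1 (h i (Finset.mem_univ i)) j
      (Finset.mem_univ j)
  rw [add_eq_zero_iff_of_nonneg (by positivity) (by positivity)] at hij
  simpa [h₁.ne', h₂'.ne', Complex.ext_iff] using hij

end Rectangular

section Square

variable {n : Type*} [Fintype n] [DecidableEq n] {d₂ d₃ : ℝ}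

theorem weightedTraceForm_sub_smul_one (P : Matrix n n ℂ) (r : ℝ) :
    weightedTraceForm d₂ d₃ (P - r • 1) =
      weightedTraceForm d₂ d₃ P - (d₂ + d₃) * (2 * r * P.trace.re - Fintype.card n * r ^ 2) := by
  have hH : ((P - r • 1) * (P - r • 1)ᴴ).trace.re
      = (P * Pᴴ).trace.re - 2 * r * P.trace.re + Fintype.card n * r ^ 2 := by
    simp only [conjTranspose_sub, conjTranspose_smul, star_trivial, conjTranspose_one, mul_sub,
      sub_mul, Algebra.smul_mul_assoc, one_mul, Algebra.mul_smul_comm, mul_one, trace_sub,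
      trace_smul, trace_conjTranspose, RCLike.star_def, Complex.real_smul, trace_one,
      Complex.sub_re, Complex.mul_re, Complex.ofReal_re, Complex.conj_re, Complex.ofReal_im,
      Complex.conj_im, mul_neg, zero_mul, neg_zero, sub_zero, Complex.natCast_re,
      Complex.natCast_im, mul_zero]
    ring
  have hT : ((P - r • 1) * (P - r • 1)ᵀ).trace.re
      = (P * Pᵀ).trace.re - 2 * r * P.trace.re + Fintype.card n * r ^ 2 := by
    simp only [transpose_sub, transpose_smul, transpose_one, mul_sub, sub_mul,
      Algebra.smul_mul_assoc, one_mul, Algebra.mul_smul_comm, mul_one, trace_sub, trace_smul,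
      trace_transpose, Complex.real_smul, trace_one, Complex.sub_re, Complex.mul_re,
      Complex.ofReal_re, Complex.ofReal_im, zero_mul, sub_zero, Complex.natCast_re,
      Complex.natCast_im, mul_zero]
    ring
  rw [weightedTraceForm, weightedTraceForm, hH, hT]
  ring

variable [Nonempty n]

theorem weightedTraceForm_sub_trace_smul_one (P : Matrix n n ℂ) :
    weightedTraceForm d₂ d₃ (P - (P.trace.re / Fintype.card n) • 1) =
      weightedTraceForm d₂ d₃ P - (d₂ + d₃) * P.trace.re ^ 2 / Fintype.card n := by
  rw [weightedTraceForm_sub_smul_one]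
  field_simp
  ring

theorem le_weightedTraceForm (h₁ : 0 ≤ d₂ + d₃) (h₂ : d₃ ≤ d₂) (P : Matrix n n ℂ) :
    (d₂ + d₃) * P.trace.re ^ 2 / Fintype.card n ≤ weightedTraceForm d₂ d₃ P := by
  have := weightedTraceForm_nonneg h₁ h₂ (P - (P.trace.re / Fintype.card n) • 1)
  rw [weightedTraceForm_sub_trace_smul_one] at this
  linarith

theorem weightedTraceForm_eq_iff (h₁ : 0 < d₂ + d₃) (h₂ : d₃ < d₂) (P : Matrix n n ℂ) :
    weightedTraceForm d₂ d₃ P = (d₂ + d₃) * P.trace.re ^ 2 / Fintype.card n ↔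
      ∃ r : ℝ, P = r • 1 := by
  rw [← sub_eq_zero, ← weightedTraceForm_sub_trace_smul_one, weightedTraceForm_eq_zero_iff h₁ h₂,
    sub_eq_zero]
  refine ⟨fun h => ⟨_, h⟩, ?_⟩
  rintro ⟨r, rfl⟩
  simp [trace_smul]

end Square

theorem Matrix.mul_eq_smul_one_comm {n K : Type*} [Fintype n] [DecidableEq n] [Field K]
    {A B : Matrix n n K} {c : K} (hc : c ≠ 0) : A * B = c • 1 ↔ B * A = c • 1 := by
  have key : ∀ A B : Matrix n n K, A * B = c • 1 → B * A = c • 1 := by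
    intro A B h
    have : c⁻¹ • A * B = 1 := by rw [smul_mul_assoc, h, smul_smul, inv_mul_cancel₀ hc, one_smul]
    calc B * A = c • (B * (c⁻¹ • A)) := by
          rw [mul_smul_comm, smul_smul, mul_inv_cancel₀ hc, one_smul]
      _ = c • 1 := by rw [mul_eq_one_comm.1 this]
  exact ⟨key A B, key B A⟩

open scoped ComplexOrder in
theorem exists_conjTranspose_mul_self_eq_smul_one_iff {n : Type*} [Fintype n] [DecidableEq n]
    {Δ : Matrix n n ℂ} (hΔ : Δ ≠ 0) :
    (∃ r : ℝ, Δᴴ * Δ = r • 1) ↔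
      (∃ c : ℂ, Δ * Δᴴ = c • 1) ∧ ∀ i j, star ((Δᴴ * Δ) i j) = (Δᴴ * Δ) i j := by
  constructor
  · rintro ⟨r, hr⟩
    have hr0 : (r : ℂ) ≠ 0 := fun h =>
      hΔ (conjTranspose_mul_self_eq_zero.1 (by simpa [Complex.ofReal_eq_zero.1 h] using hr))
    refine ⟨⟨r, (Matrix.mul_eq_smul_one_comm hr0).1 (by rw [hr, Complex.coe_smul])⟩, fun i j => ?_⟩
    rw [hr]
    by_cases hij : i = j <;> simp [one_apply, hij]
  · rintro ⟨⟨c, hc⟩, hreal⟩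
    have hc0 : c ≠ 0 := fun h => hΔ (self_mul_conjTranspose_eq_zero.1 (by simpa [h] using hc))
    have hP := (Matrix.mul_eq_smul_one_comm hc0).1 hc
    refine ⟨c.re, ?_⟩
    ext i j
    have := hreal i j
    rw [hP] at this ⊢
    by_cases hij : i = j <;> simp_all [one_apply, Complex.conj_eq_iff_re]

/-- For `d₂ + d₃ > 0`, `d₂ > d₃`: `d₂B + d₃C ≥ (1/3)(d₂+d₃)A`, with equality iff
`ΔΔ†` is proportional to the identity and `Δ†Δ` is real (the CSL condition). -/
theorem quartic_bound_CSL (d₂ d₃ : ℝ) (h₁ : 0 < d₂ + d₃) (h₂ : d₃ < d₂)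
    (Δ : Matrix (Fin 3) (Fin 3) ℂ) (hΔ : Δ ≠ 0)
    (A B C : ℝ)
    (hA : A = ((Δ * Δᴴ).trace).re ^ 2)
    (hB : B = ((Δ * Δᴴ * (Δ * Δᴴ)).trace).re)
    (hC : C = ((Δ * Δᵀ * (Δ * Δᵀ)ᴴ).trace).re) :
    d₂ * B + d₃ * C ≥ 1 / 3 * (d₂ + d₃) * A ∧
    (d₂ * B + d₃ * C = 1 / 3 * (d₂ + d₃) * A ↔
      ((∃ c : ℂ, Δ * Δᴴ = c • (1 : Matrix (Fin 3) (Fin 3) ℂ)) ∧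
        ∀ i j : Fin 3, star ((Δᴴ * Δ) i j) = (Δᴴ * Δ) i j)) := by
  have hBC : d₂ * B + d₃ * C = weightedTraceForm d₂ d₃ (Δᴴ * Δ) := by
    rw [hB, hC, trace_mul_conjTranspose_mul_self, trace_mul_transpose_mul_conjTranspose,
      weightedTraceForm]
  have hA' : 1 / 3 * (d₂ + d₃) * A =
      (d₂ + d₃) * (Δᴴ * Δ).trace.re ^ 2 / Fintype.card (Fin 3) := by
    rw [hA, trace_mul_comm, Fintype.card_fin]
    ring
  rw [hBC, hA', ge_iff_le, weightedTraceForm_eq_iff h₁ h₂,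
    exists_conjTranspose_mul_self_eq_smul_one_iff hΔ]
  exact ⟨le_weightedTraceForm h₁.le h₂.le _, Iff.rfl⟩
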